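/- Let Y_1, ..., Y_d be independent standard Gaussian random vectors in R^d. Then |det[Y_1, ..., Y_d]| has the same distribution as χ_1·χ_2⋯χ_d, the product of independent chi random variables with 1, 2, ..., d degrees of freedom. -/

import Mathlib

open MeasureTheory ProbabilityTheory
open scoped ENNReal NNReal Real

/-- The standard Gaussian measure on `ℝ^d`: independent `N(0,1)` coordinates. -/
noncomputable def stdGaussian (d : ℕ) : Measure (EuclideanSpace ℝ (Fin d)) :=
  Measure.map (MeasurableEquiv.toLp 2 (Fin d → ℝ))
    (Measure.pi fun _ : Fin d => gaussianReal 0 1)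

/-- The chi distribution with `k` degrees of freedom: the law of the norm of a
standard Gaussian vector in `ℝ^k`. -/
noncomputable def chiDist (k : ℕ) : Measure ℝ :=
  Measure.map (fun x => ‖x‖) (stdGaussian k)

namespace GaussDetAux

lemma stdGaussian_eq_pi (d : ℕ) :
    stdGaussian d = Measure.map (MeasurableEquiv.toLp 2 (Fin d → ℝ))
      (Measure.pi fun _ : Fin d => gaussianReal 0 1) := by
  rfl

instance piProbability {ι : Type*} [Fintype ι] {α : ι → Type*} [∀ i, MeasurableSpace (α i)]
    {μ : ∀ i, Measure (α i)} [∀ i, IsProbabilityMeasure (μ i)] :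
    IsProbabilityMeasure (Measure.pi μ) :=
  ⟨by rw [Measure.pi_univ]; simp⟩

instance (d : ℕ) : IsProbabilityMeasure (stdGaussian d) := by
  rw [stdGaussian_eq_pi]; exact Measure.isProbabilityMeasure_map (MeasurableEquiv.measurable _).aemeasurable

instance (k : ℕ) : IsProbabilityMeasure (chiDist k) := by
  rw [chiDist]; exact Measure.isProbabilityMeasure_map measurable_norm.aemeasurable

/-- Product lintegral over a finite product of sigma-finite measures on `ℝ`. -/
lemma lintegral_pi_prod : ∀ (n : ℕ) (μ : Fin n → Measure ℝ),
    (∀ i, SigmaFinite (μ i)) →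
    ∀ (f : Fin n → ℝ → ℝ≥0∞), (∀ i, Measurable (f i)) →
    ∫⁻ x, ∏ i, f i (x i) ∂Measure.pi μ = ∏ i, ∫⁻ t, f i t ∂(μ i) := by
  intro n
  induction n with
  | zero =>
    intro μ hμ f _
    haveI : ∀ i, SigmaFinite (μ i) := hμ
    simp [Measure.pi_univ]
  | succ n ih =>
    intro μ hμ f hf
    haveI : ∀ i, SigmaFinite (μ i) := hμ
    have h := measurePreserving_piFinSuccAbove μ 0
    have hmeas : Measurable fun p : ℝ × (Fin n → ℝ) =>
        f 0 p.1 * ∏ i : Fin n, f i.succ (p.2 i) :=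
      ((hf 0).comp measurable_fst).mul
        (Finset.measurable_prod _ fun i _ =>
          (hf i.succ).comp ((measurable_pi_apply i).comp measurable_snd))
    calc ∫⁻ x, ∏ i, f i (x i) ∂Measure.pi μ
        = ∫⁻ x, (fun p : ℝ × (Fin n → ℝ) => f 0 p.1 * ∏ i : Fin n, f i.succ (p.2 i))
            ((MeasurableEquiv.piFinSuccAbove (fun _ : Fin (n+1) => ℝ) 0) x) ∂Measure.pi μ := by
          refine lintegral_congr fun x => ?_
          simp [MeasurableEquiv.piFinSuccAbove_apply, Fin.prod_univ_succ, Fin.tail]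
      _ = ∫⁻ p, f 0 p.1 * ∏ i : Fin n, f i.succ (p.2 i)
            ∂((μ 0).prod (Measure.pi fun i : Fin n => μ ((0 : Fin (n+1)).succAbove i))) :=
          h.lintegral_comp hmeas
      _ = (∫⁻ t, f 0 t ∂(μ 0)) * ∫⁻ v : Fin n → ℝ, ∏ i : Fin n, f i.succ (v i)
            ∂(Measure.pi fun i : Fin n => μ i.succ) :=
          lintegral_prod_mul (hf 0).aemeasurable
            ((Finset.measurable_prod Finset.univ fun (i : Fin n) _ =>
              (hf i.succ).comp (measurable_pi_apply i)).aemeasurable)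
      _ = (∫⁻ t, f 0 t ∂(μ 0)) * ∏ i : Fin n, ∫⁻ t, f i.succ t ∂(μ i.succ) := by
          rw [ih (fun i => μ i.succ) (fun i => hμ i.succ) (fun i => f i.succ)
            (fun i => hf i.succ)]
      _ = ∏ i, ∫⁻ t, f i t ∂(μ i) :=
          (Fin.prod_univ_succ (fun i => ∫⁻ t, f i t ∂(μ i))).symm

lemma pi_gaussian_withDensity (d : ℕ) :
    (Measure.pi fun _ : Fin d => gaussianReal 0 1)
      = (Measure.pi fun _ : Fin d => (volume : Measure ℝ)).withDensity
          (fun x => ∏ i, gaussianPDF 0 1 (x i)) := by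
  refine Measure.pi_eq fun s hs => ?_
  rw [withDensity_apply _ (MeasurableSet.univ_pi hs),
    ← lintegral_indicator (MeasurableSet.univ_pi hs)]
  have hind : ∀ x : Fin d → ℝ,
      (Set.univ.pi s).indicator (fun x : Fin d → ℝ => ∏ i, gaussianPDF 0 1 (x i)) x
        = ∏ i, (s i).indicator (gaussianPDF 0 1) (x i) := by
    intro x
    by_cases hx : x ∈ Set.univ.pi s
    · rw [Set.indicator_of_mem hx]
      exact Finset.prod_congr rfl fun i _ =>
        (Set.indicator_of_mem (hx i (Set.mem_univ i)) _).symm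
    · rw [Set.indicator_of_notMem hx]
      obtain ⟨i, hi⟩ : ∃ i, x i ∉ s i := by simpa [Set.mem_pi] using hx
      exact (Finset.prod_eq_zero (Finset.mem_univ i)
        (Set.indicator_of_notMem hi _)).symm
  calc ∫⁻ x, (Set.univ.pi s).indicator
          (fun x : Fin d → ℝ => ∏ i, gaussianPDF 0 1 (x i)) x
          ∂(Measure.pi fun _ : Fin d => (volume : Measure ℝ))
      = ∫⁻ x, ∏ i, (s i).indicator (gaussianPDF 0 1) (x i)
          ∂(Measure.pi fun _ : Fin d => (volume : Measure ℝ)) := lintegral_congr hind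
    _ = ∏ i, ∫⁻ t, (s i).indicator (gaussianPDF 0 1) t ∂(volume : Measure ℝ) :=
        lintegral_pi_prod d _ (fun _ => inferInstance) _
          (fun i => ((measurable_gaussianPDFReal 0 1).ennreal_ofReal).indicator (hs i))
    _ = ∏ i, gaussianReal 0 1 (s i) := by
        refine Finset.prod_congr rfl fun i _ => ?_
        rw [lintegral_indicator (hs i), gaussianReal_of_var_ne_zero _ one_ne_zero,
          withDensity_apply _ (hs i)]

lemma volume_euclidean_eq_pi (d : ℕ) :
    Measure.map (MeasurableEquiv.toLp 2 (Fin d → ℝ)) (Measure.pi fun _ : Fin d => (volume : Measure ℝ))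
      = (volume : Measure (EuclideanSpace ℝ (Fin d))) := by
  rw [← volume_pi]
  exact (PiLp.volume_preserving_toLp (Fin d)).map_eq

lemma norm_sq_euclidean {d : ℕ} (x : EuclideanSpace ℝ (Fin d)) :
    ‖x‖ ^ 2 = ∑ i, x i ^ 2 := by
  rw [EuclideanSpace.norm_eq, Real.sq_sqrt (by positivity)]
  simp [sq_abs]

lemma prod_gaussianPDFReal {d : ℕ} (x : EuclideanSpace ℝ (Fin d)) :
    ∏ i, gaussianPDFReal 0 1 (x i)
      = (Real.sqrt (2 * π))⁻¹ ^ d * Real.exp (-‖x‖ ^ 2 / 2) := by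
  simp only [gaussianPDFReal_def, NNReal.coe_one, mul_one, sub_zero]
  rw [Finset.prod_mul_distrib, Finset.prod_const, Finset.card_univ, Fintype.card_fin,
    ← Real.exp_sum]
  congr 1
  rw [norm_sq_euclidean, neg_div, Finset.sum_div]
  rw [← Finset.sum_neg_distrib]
  exact congrArg rexp (Finset.sum_congr rfl fun i _ => by ring)

lemma map_withDensity_measurableEquiv {α β : Type*} [MeasurableSpace α] [MeasurableSpace β]
    (e : α ≃ᵐ β) (μ : Measure α) {f : α → ℝ≥0∞} (hf : Measurable f) :
    Measure.map e (μ.withDensity f) = (Measure.map e μ).withDensity (f ∘ e.symm) := by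
  ext s hs
  rw [Measure.map_apply e.measurable hs, withDensity_apply _ (e.measurable hs),
    withDensity_apply _ hs,
    setLIntegral_map hs (hf.comp e.symm.measurable) e.measurable]
  refine setLIntegral_congr_fun (e.measurable hs) (fun x _ => ?_)
  simp

lemma stdGaussian_withDensity (d : ℕ) :
    stdGaussian d = (volume : Measure (EuclideanSpace ℝ (Fin d))).withDensity
      (fun x => ENNReal.ofReal ((Real.sqrt (2 * π))⁻¹ ^ d * Real.exp (-‖x‖ ^ 2 / 2))) := by
  have hmeas : Measurable fun x : Fin d → ℝ => ∏ i, gaussianPDF 0 1 (x i) :=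
    Finset.measurable_prod _ fun i _ => (measurable_gaussianPDF 0 1).comp (measurable_pi_apply i)
  rw [stdGaussian_eq_pi, pi_gaussian_withDensity, map_withDensity_measurableEquiv _ _ hmeas,
    volume_euclidean_eq_pi]
  congr 1
  funext x
  show ∏ i, gaussianPDF 0 1 (x i) = _
  rw [gaussianPDF_def, ← ENNReal.ofReal_prod_of_nonneg
    (fun i _ => gaussianPDFReal_nonneg 0 1 (x i))]
  rw [prod_gaussianPDFReal x]

lemma stdGaussian_map_isometry (d : ℕ)
    (R : EuclideanSpace ℝ (Fin d) ≃ₗᵢ[ℝ] EuclideanSpace ℝ (Fin d)) :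
    Measure.map R (stdGaussian d) = stdGaussian d := by
  have hdens : Measurable fun x : EuclideanSpace ℝ (Fin d) =>
      ENNReal.ofReal ((Real.sqrt (2 * π))⁻¹ ^ d * Real.exp (-‖x‖ ^ 2 / 2)) := by
    refine Measurable.ennreal_ofReal ?_
    exact (measurable_const.mul (((measurable_norm.pow_const 2).neg.div_const 2).exp))
  rw [stdGaussian_withDensity]
  have hcoe : (⇑R : EuclideanSpace ℝ (Fin d) → EuclideanSpace ℝ (Fin d))
      = ⇑(R.toMeasurableEquiv) := rfl
  rw [hcoe, map_withDensity_measurableEquiv _ _ hdens]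
  rw [← hcoe, R.measurePreserving.map_eq]
  congr 1
  funext x
  have : ‖R.toMeasurableEquiv.symm x‖ = ‖x‖ := by
    have : R.toMeasurableEquiv.symm x = R.symm x := rfl
    rw [this, LinearIsometryEquiv.norm_map]
  simp [Function.comp, this]

lemma stdGaussian_measurePreserving_isometry (d : ℕ)
    (R : EuclideanSpace ℝ (Fin d) ≃ₗᵢ[ℝ] EuclideanSpace ℝ (Fin d)) :
    MeasurePreserving (⇑R) (stdGaussian d) (stdGaussian d) :=
  ⟨R.continuous.measurable, stdGaussian_map_isometry d R⟩

lemma stdGaussian_map_tail (d : ℕ) :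
    Measure.map (fun (x : EuclideanSpace ℝ (Fin (d+1))) =>
        (WithLp.toLp 2 (fun j : Fin d => x j.succ) : EuclideanSpace ℝ (Fin d)))
      (stdGaussian (d+1)) = stdGaussian d := by
  have hT : Measurable (fun (x : EuclideanSpace ℝ (Fin (d+1))) =>
        (WithLp.toLp 2 (fun j : Fin d => x j.succ) : EuclideanSpace ℝ (Fin d))) :=
    (MeasurableEquiv.toLp 2 (Fin d → ℝ)).measurable.comp (measurable_pi_lambda _ fun j =>
      (measurable_pi_apply _).comp (MeasurableEquiv.toLp 2 (Fin (d+1) → ℝ)).symm.measurable)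
  rw [stdGaussian_eq_pi, stdGaussian_eq_pi, Measure.map_map hT (MeasurableEquiv.measurable _)]
  have h := measurePreserving_piFinSuccAbove (fun _ : Fin (d+1) => gaussianReal 0 1) 0
  have hcomp : (fun (x : EuclideanSpace ℝ (Fin (d+1))) =>
      (WithLp.toLp 2 (fun j : Fin d => x j.succ) : EuclideanSpace ℝ (Fin d)))
        ∘ ⇑(MeasurableEquiv.toLp 2 (Fin (d+1) → ℝ))
      = ⇑(MeasurableEquiv.toLp 2 (Fin d → ℝ)) ∘ (Prod.snd ∘
        ⇑(MeasurableEquiv.piFinSuccAbove (fun _ : Fin (d+1) => ℝ) 0)) := rfl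
  have hmm : Measure.map (Prod.snd ∘ ⇑(MeasurableEquiv.piFinSuccAbove (fun _ : Fin (d+1) => ℝ) 0))
      (Measure.pi fun _ : Fin (d+1) => gaussianReal 0 1)
      = Measure.map Prod.snd (Measure.map
          (⇑(MeasurableEquiv.piFinSuccAbove (fun _ : Fin (d+1) => ℝ) 0))
          (Measure.pi fun _ : Fin (d+1) => gaussianReal 0 1)) :=
    (Measure.map_map measurable_snd (MeasurableEquiv.measurable _)).symm
  rw [hcomp, ← Measure.map_map (MeasurableEquiv.measurable _)
    (measurable_snd.comp (MeasurableEquiv.measurable _)), hmm, h.map_eq, Measure.map_snd_prod]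
  simp

lemma stdGaussian_tail_measurePreserving (d : ℕ) :
    MeasurePreserving (fun (x : EuclideanSpace ℝ (Fin (d+1))) =>
        (WithLp.toLp 2 (fun j : Fin d => x j.succ) : EuclideanSpace ℝ (Fin d)))
      (stdGaussian (d+1)) (stdGaussian d) :=
  ⟨(MeasurableEquiv.toLp 2 (Fin d → ℝ)).measurable.comp (measurable_pi_lambda _ fun j =>
      (measurable_pi_apply _).comp (MeasurableEquiv.toLp 2 (Fin (d+1) → ℝ)).symm.measurable),
      stdGaussian_map_tail d⟩

lemma det_of_eq_basis_det {n : ℕ} (v : Fin n → EuclideanSpace ℝ (Fin n)) :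
    Matrix.det (Matrix.of fun i j => v j i)
      = (EuclideanSpace.basisFun (Fin n) ℝ).toBasis.det v := by
  rw [Module.Basis.det_apply]
  congr 1

lemma abs_linearMap_det_isometry {n : ℕ}
    (R : EuclideanSpace ℝ (Fin n) ≃ₗᵢ[ℝ] EuclideanSpace ℝ (Fin n)) :
    |LinearMap.det (R.toLinearEquiv : EuclideanSpace ℝ (Fin n) →ₗ[ℝ] EuclideanSpace ℝ (Fin n))|
      = 1 := by
  classical
  set b := EuclideanSpace.basisFun (Fin n) ℝ with hb
  have h1 : b.toBasis.det (⇑((b.map R).toBasis))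
      = LinearMap.det (R.toLinearEquiv :
          EuclideanSpace ℝ (Fin n) →ₗ[ℝ] EuclideanSpace ℝ (Fin n)) := by
    have h2 : ⇑((b.map R).toBasis)
        = (⇑(R.toLinearEquiv : EuclideanSpace ℝ (Fin n) →ₗ[ℝ] EuclideanSpace ℝ (Fin n))
            ∘ ⇑(b.toBasis)) := by
      funext i
      simp [OrthonormalBasis.coe_toBasis, OrthonormalBasis.map_apply]
    rw [h2, Module.Basis.det_comp, Module.Basis.det_self, mul_one]
  rcases b.det_to_matrix_orthonormalBasis_real (b.map R) with h | h
  · rw [← h1]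
    rw [show b.toBasis.det ⇑((b.map R).toBasis) = b.toBasis.det ⇑(b.map R) by
      rw [OrthonormalBasis.coe_toBasis]]
    rw [h]; norm_num
  · rw [← h1]
    rw [show b.toBasis.det ⇑((b.map R).toBasis) = b.toBasis.det ⇑(b.map R) by
      rw [OrthonormalBasis.coe_toBasis]]
    rw [h]; norm_num

lemma absdet_isometry_comp {n : ℕ}
    (R : EuclideanSpace ℝ (Fin n) ≃ₗᵢ[ℝ] EuclideanSpace ℝ (Fin n))
    (x : Fin n → EuclideanSpace ℝ (Fin n)) :
    |Matrix.det (Matrix.of fun i j => (R (x j)) i)|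
      = |Matrix.det (Matrix.of fun i j => (x j) i)| := by
  rw [det_of_eq_basis_det, det_of_eq_basis_det]
  have h2 : (fun j => R (x j))
      = (⇑(R.toLinearEquiv : EuclideanSpace ℝ (Fin n) →ₗ[ℝ] EuclideanSpace ℝ (Fin n)) ∘ x) :=
    rfl
  rw [h2, Module.Basis.det_comp, abs_mul, abs_linearMap_det_isometry, one_mul]

lemma det_cons_smul_single {n : ℕ} (c : ℝ) (z : Fin n → EuclideanSpace ℝ (Fin (n+1))) :
    |Matrix.det (Matrix.of fun i j =>
        (Fin.cons (c • EuclideanSpace.single (0 : Fin (n+1)) (1:ℝ)) z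
          : Fin (n+1) → EuclideanSpace ℝ (Fin (n+1))) j i)|
      = |c| * |Matrix.det (Matrix.of fun (i j : Fin n) => z j i.succ)| := by
  classical
  set M : Matrix (Fin (n+1)) (Fin (n+1)) ℝ := Matrix.of fun i j =>
    (Fin.cons (c • EuclideanSpace.single (0 : Fin (n+1)) (1:ℝ)) z
      : Fin (n+1) → EuclideanSpace ℝ (Fin (n+1))) j i with hM
  have hcol : ∀ i, M i 0 = if i = 0 then c else 0 := by
    intro i
    simp only [hM, Matrix.of_apply, Fin.cons_zero]
    rw [PiLp.smul_apply, EuclideanSpace.single_apply]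
    by_cases h : i = 0
    · subst h; simp
    · simp [h]
  have hdet : M.det = c * Matrix.det (Matrix.of fun (i j : Fin n) => z j i.succ) := by
    rw [Matrix.det_succ_column_zero]
    rw [Finset.sum_eq_single 0]
    · rw [hcol 0, if_pos rfl]
      simp only [Fin.val_zero, pow_zero, one_mul]
      congr 1
    · intro i _ hi
      rw [hcol i, if_neg hi, mul_zero, zero_mul]
    · intro h; exact absurd (Finset.mem_univ 0) h
  rw [hdet, abs_mul]

lemma measurable_absdet (m : ℕ) :
    Measurable fun x : Fin m → EuclideanSpace ℝ (Fin m) =>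
      |Matrix.det (Matrix.of fun i j => x j i)| := by
  have hc : Continuous fun x : Fin m → EuclideanSpace ℝ (Fin m) =>
      (Matrix.of fun i j => x j i : Matrix (Fin m) (Fin m) ℝ) :=
    continuous_matrix fun i j => (continuous_apply i).comp ((PiLp.continuous_ofLp ..).comp (continuous_apply j))
  exact (hc.matrix_det.abs).measurable

set_option maxHeartbeats 2000000 in
set_option synthInstance.maxHeartbeats 1000000 in
lemma key : ∀ (d : ℕ) (f : ℝ → ℝ≥0∞), Measurable f →
    ∫⁻ x : Fin d → EuclideanSpace ℝ (Fin d),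
        f |Matrix.det (Matrix.of fun i j => x j i)|
        ∂(Measure.pi fun _ : Fin d => stdGaussian d)
    = ∫⁻ y : Fin d → ℝ, f (∏ j, y j)
        ∂(Measure.pi fun j : Fin d => chiDist (j + 1)) := by
  intro d
  induction d with
  | zero =>
    intro f _
    haveI := piProbability (μ := fun _ : Fin 0 => stdGaussian 0)
    haveI := piProbability (μ := fun j : Fin 0 => chiDist (j + 1))
    simp [Matrix.det_isEmpty, lintegral_const]
  | succ d ih =>
    intro f hf
    haveI := piProbability (μ := fun _ : Fin (d+1) => stdGaussian (d+1))
    haveI := piProbability (μ := fun _ : Fin d => stdGaussian (d+1))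
    haveI := piProbability (μ := fun j : Fin d => chiDist ((j : ℕ) + 1))
    haveI := piProbability (μ := fun _ : Fin d => stdGaussian d)
    haveI := piProbability (μ := fun j : Fin (d+1) => chiDist ((j : ℕ) + 1))
    -- measurability of the pair integrand
    have hmeasg : Measurable fun p : EuclideanSpace ℝ (Fin (d+1)) ×
        (Fin d → EuclideanSpace ℝ (Fin (d+1))) =>
        f |Matrix.det (Matrix.of fun i j =>
          (Fin.cons p.1 p.2 : Fin (d+1) → EuclideanSpace ℝ (Fin (d+1))) j i)| := by
      refine hf.comp ?_
      have hc : Continuous fun p : EuclideanSpace ℝ (Fin (d+1)) ×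
          (Fin d → EuclideanSpace ℝ (Fin (d+1))) =>
          (Matrix.of fun i j =>
            (Fin.cons p.1 p.2 : Fin (d+1) → EuclideanSpace ℝ (Fin (d+1))) j i
            : Matrix (Fin (d+1)) (Fin (d+1)) ℝ) := by
        refine continuous_matrix fun i j => ?_
        refine Fin.cases ?_ (fun j' => ?_) j
        · simpa [Function.comp_def] using (continuous_apply i).comp ((PiLp.continuous_ofLp ..).comp continuous_fst)
        · simpa [Fin.cons_succ, Function.comp_def] using
            (continuous_apply i).comp ((PiLp.continuous_ofLp ..).comp ((continuous_apply j').comp continuous_snd))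
      exact (hc.matrix_det.abs).measurable
    have hunc : Measurable fun p : ℝ × (Fin d → ℝ) => f (p.1 * ∏ j, p.2 j) :=
      hf.comp (measurable_fst.mul
        (Finset.measurable_prod Finset.univ fun (j : Fin d) _ =>
          (measurable_pi_apply j).comp measurable_snd))
    -- the conditional (inner) computation
    have inner_eq : ∀ y : EuclideanSpace ℝ (Fin (d+1)),
        ∫⁻ z : Fin d → EuclideanSpace ℝ (Fin (d+1)),
            f |Matrix.det (Matrix.of fun i j =>
              (Fin.cons y z : Fin (d+1) → EuclideanSpace ℝ (Fin (d+1))) j i)|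
            ∂(Measure.pi fun _ : Fin d => stdGaussian (d+1))
        = ∫⁻ u : Fin d → ℝ, f (‖y‖ * ∏ j, u j)
            ∂(Measure.pi fun j : Fin d => chiDist ((j : ℕ) + 1)) := by
      intro y
      by_cases hy : y = 0
      · subst hy
        have hdet0 : ∀ z : Fin d → EuclideanSpace ℝ (Fin (d+1)),
            Matrix.det (Matrix.of fun i j =>
              (Fin.cons (0 : EuclideanSpace ℝ (Fin (d+1))) z
                : Fin (d+1) → EuclideanSpace ℝ (Fin (d+1))) j i) = 0 := fun z =>
          Matrix.det_eq_zero_of_column_eq_zero 0 fun i => by simp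
        simp only [hdet0, norm_zero, zero_mul, abs_zero]
        simp [lintegral_const]
      · set w : EuclideanSpace ℝ (Fin (d+1)) :=
          ‖y‖ • EuclideanSpace.single (0 : Fin (d+1)) (1:ℝ) with hw
        have hnorm : ‖y‖ = ‖w‖ := by
          rw [hw, norm_smul, EuclideanSpace.norm_single]
          simp [abs_of_nonneg (norm_nonneg y)]
        set R := Submodule.reflection (Submodule.span ℝ {y - w})ᗮ with hR
        have hRy : R y = w := Submodule.reflection_sub hnorm
        have hFmeas : Measurable fun z : Fin d → EuclideanSpace ℝ (Fin (d+1)) =>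
            f |Matrix.det (Matrix.of fun i j =>
              (Fin.cons y z : Fin (d+1) → EuclideanSpace ℝ (Fin (d+1))) j i)| :=
          hmeasg.comp measurable_prodMk_left
        have hA := (measurePreserving_pi (fun _ : Fin d => stdGaussian (d+1))
            (fun _ : Fin d => stdGaussian (d+1))
            (fun _ => stdGaussian_measurePreserving_isometry (d+1) R.symm)).lintegral_comp
            hFmeas
        have hpoint : ∀ z : Fin d → EuclideanSpace ℝ (Fin (d+1)),
            f |Matrix.det (Matrix.of fun i j =>
                (Fin.cons y (fun j' : Fin d => R.symm (z j'))
                  : Fin (d+1) → EuclideanSpace ℝ (Fin (d+1))) j i)|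
            = f (‖y‖ * |Matrix.det (Matrix.of fun (i j : Fin d) => z j i.succ)|) := by
          intro z
          congr 1
          have h1 := (absdet_isometry_comp R
            (Fin.cons y (fun j' : Fin d => R.symm (z j')))).symm
          rw [h1]
          have h2 : (fun j => R ((Fin.cons y (fun j' : Fin d => R.symm (z j'))
              : Fin (d+1) → EuclideanSpace ℝ (Fin (d+1))) j))
              = (Fin.cons w z : Fin (d+1) → EuclideanSpace ℝ (Fin (d+1))) := by
            funext j
            refine Fin.cases ?_ (fun j' => ?_) j
            · simp [Fin.cons_zero, hRy]
            · simp [Fin.cons_succ]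
          have h3 : (Matrix.of fun i j =>
              (R ((Fin.cons y (fun j' : Fin d => R.symm (z j'))
                : Fin (d+1) → EuclideanSpace ℝ (Fin (d+1))) j)) i)
              = (Matrix.of fun i j =>
                (Fin.cons w z : Fin (d+1) → EuclideanSpace ℝ (Fin (d+1))) j i) := by
            ext i j
            simp only [Matrix.of_apply]
            exact congrArg (fun v : EuclideanSpace ℝ (Fin (d+1)) => v i) (congrFun h2 j)
          rw [h3, hw, det_cons_smul_single ‖y‖ z, abs_of_nonneg (norm_nonneg y)]
        have hGmeas : Measurable fun v : Fin d → EuclideanSpace ℝ (Fin d) =>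
            f (‖y‖ * |Matrix.det (Matrix.of fun i j => v j i)|) :=
          hf.comp ((measurable_absdet d).const_mul ‖y‖)
        calc ∫⁻ z : Fin d → EuclideanSpace ℝ (Fin (d+1)),
              f |Matrix.det (Matrix.of fun i j =>
                (Fin.cons y z : Fin (d+1) → EuclideanSpace ℝ (Fin (d+1))) j i)|
              ∂(Measure.pi fun _ : Fin d => stdGaussian (d+1))
            = ∫⁻ z : Fin d → EuclideanSpace ℝ (Fin (d+1)),
              f |Matrix.det (Matrix.of fun i j =>
                (Fin.cons y (fun j' : Fin d => R.symm (z j'))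
                  : Fin (d+1) → EuclideanSpace ℝ (Fin (d+1))) j i)|
              ∂(Measure.pi fun _ : Fin d => stdGaussian (d+1)) := hA.symm
          _ = ∫⁻ z : Fin d → EuclideanSpace ℝ (Fin (d+1)),
              f (‖y‖ * |Matrix.det (Matrix.of fun (i j : Fin d) => z j i.succ)|)
              ∂(Measure.pi fun _ : Fin d => stdGaussian (d+1)) :=
              lintegral_congr fun z => hpoint z
          _ = ∫⁻ v : Fin d → EuclideanSpace ℝ (Fin d),
              f (‖y‖ * |Matrix.det (Matrix.of fun i j => v j i)|)
              ∂(Measure.pi fun _ : Fin d => stdGaussian d) :=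
              (measurePreserving_pi (fun _ : Fin d => stdGaussian (d+1))
                (fun _ : Fin d => stdGaussian d)
                (fun _ => stdGaussian_tail_measurePreserving d)).lintegral_comp hGmeas
          _ = ∫⁻ u : Fin d → ℝ, f (‖y‖ * ∏ j, u j)
              ∂(Measure.pi fun j : Fin d => chiDist ((j : ℕ) + 1)) :=
              ih (fun t => f (‖y‖ * t)) (hf.comp (measurable_id.const_mul ‖y‖))
    -- outer computation
    have h1 := measurePreserving_piFinSuccAbove
      (fun _ : Fin (d+1) => stdGaussian (d+1)) 0
    have hG : Measurable fun r : ℝ =>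
        ∫⁻ u : Fin d → ℝ, f (r * ∏ j, u j)
          ∂(Measure.pi fun j : Fin d => chiDist ((j : ℕ) + 1)) :=
      Measurable.lintegral_prod_right hunc
    have h2 := measurePreserving_piFinSuccAbove
      (fun j : Fin (d+1) => chiDist ((j : ℕ) + 1)) (Fin.last d)
    simp only [Fin.succAbove_last, Fin.coe_castSucc, Fin.val_last] at h2
    calc ∫⁻ x : Fin (d+1) → EuclideanSpace ℝ (Fin (d+1)),
          f |Matrix.det (Matrix.of fun i j => x j i)|
          ∂(Measure.pi fun _ : Fin (d+1) => stdGaussian (d+1))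
        = ∫⁻ p : EuclideanSpace ℝ (Fin (d+1)) × (Fin d → EuclideanSpace ℝ (Fin (d+1))),
            f |Matrix.det (Matrix.of fun i j =>
              (Fin.cons p.1 p.2 : Fin (d+1) → EuclideanSpace ℝ (Fin (d+1))) j i)|
            ∂((stdGaussian (d+1)).prod
                (Measure.pi fun _ : Fin d => stdGaussian (d+1))) := by
          rw [← h1.lintegral_comp hmeasg]
          refine lintegral_congr fun x => ?_
          have he : (MeasurableEquiv.piFinSuccAbove
              (fun _ : Fin (d+1) => EuclideanSpace ℝ (Fin (d+1))) 0) x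
              = (x 0, fun j => x (Fin.succAbove 0 j)) := rfl
          rw [he]
          have hx : (Fin.cons (x 0) (fun j => x (Fin.succAbove 0 j))
              : Fin (d+1) → EuclideanSpace ℝ (Fin (d+1))) = x := Fin.cons_self_tail x
          exact (congrArg (fun v : Fin (d+1) → EuclideanSpace ℝ (Fin (d+1)) =>
            f |Matrix.det (Matrix.of fun i j => v j i)|) hx).symm
      _ = ∫⁻ y, ∫⁻ z : Fin d → EuclideanSpace ℝ (Fin (d+1)),
            f |Matrix.det (Matrix.of fun i j =>
              (Fin.cons y z : Fin (d+1) → EuclideanSpace ℝ (Fin (d+1))) j i)|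
            ∂(Measure.pi fun _ : Fin d => stdGaussian (d+1)) ∂(stdGaussian (d+1)) :=
          lintegral_prod _ hmeasg.aemeasurable
      _ = ∫⁻ y, ∫⁻ u : Fin d → ℝ, f (‖y‖ * ∏ j, u j)
            ∂(Measure.pi fun j : Fin d => chiDist ((j : ℕ) + 1)) ∂(stdGaussian (d+1)) :=
          lintegral_congr fun y => inner_eq y
      _ = ∫⁻ r : ℝ, ∫⁻ u : Fin d → ℝ, f (r * ∏ j, u j)
            ∂(Measure.pi fun j : Fin d => chiDist ((j : ℕ) + 1)) ∂(chiDist (d+1)) := by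
          rw [chiDist, lintegral_map hG measurable_norm]
      _ = ∫⁻ p : ℝ × (Fin d → ℝ), f (p.1 * ∏ j, p.2 j)
            ∂((chiDist (d+1)).prod (Measure.pi fun j : Fin d => chiDist ((j : ℕ) + 1))) :=
          (lintegral_prod _ hunc.aemeasurable).symm
      _ = ∫⁻ x : Fin (d+1) → ℝ, f (∏ j, x j)
            ∂(Measure.pi fun j : Fin (d+1) => chiDist ((j : ℕ) + 1)) := by
          rw [← h2.lintegral_comp hunc]
          refine lintegral_congr fun x => ?_
          have he : (MeasurableEquiv.piFinSuccAbove (fun _ : Fin (d+1) => ℝ) (Fin.last d)) x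
              = (x (Fin.last d), fun j => x ((Fin.last d).succAbove j)) := rfl
          rw [he]
          congr 1
          simp only [Fin.succAbove_last]
          rw [Fin.prod_univ_castSucc, mul_comm]

end GaussDetAux

/-- `|det[Y₁, …, Y_d]|` for independent standard Gaussian columns
is distributed as the product `χ₁ χ₂ ⋯ χ_d` of independent chi variables. -/
theorem gaussian_determinant_distribution
    {Ω : Type*} [MeasurableSpace Ω] (P : Measure Ω) [IsProbabilityMeasure P]
    (d : ℕ) (Y : Fin d → Ω → EuclideanSpace ℝ (Fin d))
    (hindep : iIndepFun Y P)
    (hlaw : ∀ i, Measure.map (Y i) P = stdGaussian d) :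
    Measure.map
      (fun ω => |Matrix.det (Matrix.of fun i j : Fin d => Y j ω i)|) P
    = Measure.map
        (fun y : Fin d → ℝ => ∏ j, y j)
        (Measure.pi fun j : Fin d => chiDist (j + 1)) := by
  classical
  haveI : ∀ i : Fin d, SigmaFinite (stdGaussian d) := fun _ => inferInstance
  have hYmeas : ∀ i, AEMeasurable (Y i) P := by
    intro i
    by_contra h
    have h0 := hlaw i
    rw [Measure.map_of_not_aemeasurable h] at h0
    have huniv : (stdGaussian d) Set.univ = 1 := measure_univ
    rw [← h0] at huniv
    simp at huniv
  have hjoint : AEMeasurable (fun ω => fun i => Y i ω) P := by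
    refine ⟨fun ω i => (hYmeas i).mk (Y i) ω,
      measurable_pi_lambda _ fun i => (hYmeas i).measurable_mk, ?_⟩
    have hae : ∀ᵐ ω ∂P, ∀ i, Y i ω = (hYmeas i).mk (Y i) ω :=
      ae_all_iff.mpr fun i => (hYmeas i).ae_eq_mk
    filter_upwards [hae] with ω hω
    funext i
    exact hω i
  have hmap : Measure.map (fun ω => fun i => Y i ω) P
      = Measure.pi fun _ : Fin d => stdGaussian d := by
    refine (Measure.pi_eq fun s hs => ?_).symm
    rw [Measure.map_apply_of_aemeasurable hjoint (MeasurableSet.univ_pi hs)]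
    have hpre : (fun ω => fun i => Y i ω) ⁻¹' Set.univ.pi s
        = ⋂ i ∈ Finset.univ, Y i ⁻¹' s i := by
      ext ω; simp [Set.mem_pi]
    rw [hpre, hindep.measure_inter_preimage_eq_mul Finset.univ (fun i _ => hs i)]
    refine Finset.prod_congr rfl fun i _ => ?_
    rw [← hlaw i, Measure.map_apply_of_aemeasurable (hYmeas i) (hs i)]
  have hdetm := GaussDetAux.measurable_absdet d
  have hprodm : Measurable fun y : Fin d → ℝ => ∏ j, y j :=
    Finset.measurable_prod Finset.univ fun j _ => measurable_pi_apply j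
  have hcomp : (fun ω => |Matrix.det (Matrix.of fun i j : Fin d => Y j ω i)|)
      = (fun x : Fin d → EuclideanSpace ℝ (Fin d) =>
          |Matrix.det (Matrix.of fun i j => x j i)|) ∘ (fun ω => fun i => Y i ω) := rfl
  rw [hcomp, ← AEMeasurable.map_map_of_aemeasurable hdetm.aemeasurable hjoint, hmap]
  ext s hs
  rw [Measure.map_apply hdetm hs, Measure.map_apply hprodm hs,
    ← lintegral_indicator_one (hdetm hs), ← lintegral_indicator_one (hprodm hs)]
  have e1 : ∫⁻ x, ((fun x : Fin d → EuclideanSpace ℝ (Fin d) =>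
        |Matrix.det (Matrix.of fun i j => x j i)|) ⁻¹' s).indicator 1 x
        ∂(Measure.pi fun _ : Fin d => stdGaussian d)
      = ∫⁻ x : Fin d → EuclideanSpace ℝ (Fin d),
        s.indicator 1 |Matrix.det (Matrix.of fun i j => x j i)|
        ∂(Measure.pi fun _ : Fin d => stdGaussian d) :=
    lintegral_congr fun x => by
      by_cases hx : |Matrix.det (Matrix.of fun i j => x j i)| ∈ s <;>
        simp [Set.indicator_apply, hx]
  have e2 : ∫⁻ y, ((fun y : Fin d → ℝ => ∏ j, y j) ⁻¹' s).indicator 1 y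
        ∂(Measure.pi fun j : Fin d => chiDist (j + 1))
      = ∫⁻ y : Fin d → ℝ, s.indicator 1 (∏ j, y j)
        ∂(Measure.pi fun j : Fin d => chiDist (j + 1)) :=
    lintegral_congr fun y => by
      by_cases hy : (∏ j, y j) ∈ s <;> simp [Set.indicator_apply, hy]
  rw [e1, e2]
  exact GaussDetAux.key d (s.indicator 1) (measurable_one.indicator hs)
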